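/- Fix θ > 0, an integer K ≥ 1 and m ∈ ℕ^K. The explicit coefficients p_{m,n}(t), 0 ≤ n ≤ m, satisfy: (i) p_{m,m}(0) = 1 and p_{m,n}(0) = 0 for every n ≠ m with n ≤ m; (ii) for every t ≥ 0 and every 0 ≤ n ≤ m, the function t ↦ p_{m,n}(t) is differentiable with d/dt p_{m,n}(t) = ((θ+|n|)/2) ∑_{i=1}^K (n_i + 1) p_{m, n+e_i}(t) − λ_{|n|} p_{m,n}(t), where p_{m,n+e_i}(t) := 0 whenever n+e_i ≤ m fails. These are the Kolmogorov forward equations of the pure-death process on ℕ^K which jumps from m' to m'−e_i at rate m'_i(θ+|m'|−1)/2, identifying p_{m,n}(t) as its transition probabilities (Lemma A.1). -/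

import Mathlib

open Finset

/-- The death-process rates `λₙ = n(θ + n - 1)/2`. -/
noncomputable def lam (θ : ℝ) (n : ℕ) : ℝ := n * (θ + n - 1) / 2

/-- The coefficient `C_{M, M - i}(t)`. -/
noncomputable def Ccoef (θ : ℝ) (M i : ℕ) (t : ℝ) : ℝ :=
  (-1 : ℝ) ^ i * ∑ k ∈ Finset.range (i + 1),
    Real.exp (-(lam θ (M - k)) * t) /
      ∏ h ∈ (Finset.range (i + 1)).erase k, (lam θ (M - k) - lam θ (M - h))

/-- The multivariate hypergeometric weight `p(i; m, |i|)`. -/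
noncomputable def hyp {K : ℕ} (m i : Fin K → ℕ) : ℝ :=
  ((∑ j, m j).choose (∑ j, i j) : ℝ)⁻¹ * ∏ j, ((m j).choose (i j) : ℝ)

/-- The explicit death-process transition coefficient `p_{m, m - i}(t)`. -/
noncomputable def pcoef (θ : ℝ) {K : ℕ} (m i : Fin K → ℕ) (t : ℝ) : ℝ :=
  if i = 0 then Real.exp (-(lam θ (∑ j, m j)) * t)
  else Ccoef θ (∑ j, m j) (∑ j, i j) t *
    (∏ h ∈ Finset.range (∑ j, i j), lam θ ((∑ j, m j) - h)) * hyp m i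

/-- The transition coefficient `p_{m,n}(t)`, set to `0` when `n ≤ m` fails. -/
noncomputable def q (θ : ℝ) {K : ℕ} (m n : Fin K → ℕ) (t : ℝ) : ℝ :=
  if ∀ i, n i ≤ m i then pcoef θ m (m - n) t else 0

/-!
At `t = 0` the sum `∑ₖ 1 / ∏_{h ≠ k} (λ_{M-k} - λ_{M-h})` is the coefficient of degree `I` of the
Lagrange interpolant of the constant `1` at the `I + 1 ≥ 2` distinct nodes `λ_{M-k}`, hence `0`.
Differentiating the exponentials gives `C'_{M,M-I-1} = C_{M,M-I} - λ_{M-I-1} C_{M,M-I-1}`, and with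
`λ_{|n|+1} = (|n|+1)(θ+|n|)/2` the forward equation reduces to the hypergeometric identity
`∑ⱼ (nⱼ + 1) p(m - n - eⱼ) = (|n| + 1) p(m - n)`, which follows coordinatewise from
`(b + 1) (a choose (b + 1)) = (a - b) (a choose b)`.
-/

lemma lam_strictMono {θ : ℝ} (hθ : 0 < θ) : StrictMono (lam θ) := by
  intro a b hab
  have hab' : (a : ℝ) + 1 ≤ b := by exact_mod_cast hab
  have ha : (0 : ℝ) ≤ a := a.cast_nonneg
  unfold lam
  nlinarith

lemma lam_succ (θ : ℝ) (n : ℕ) : lam θ (n + 1) = (n + 1) * (θ + n) / 2 := by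
  unfold lam
  push_cast
  ring

lemma injOn_lam_sub {θ : ℝ} (hθ : 0 < θ) {M I : ℕ} (hIM : I ≤ M) :
    Set.InjOn (fun k => lam θ (M - k)) (range (I + 1)) := by
  intro a ha b hb hab
  have := (lam_strictMono hθ).injective hab
  simp only [coe_range, Set.mem_Iio] at ha hb
  omega

lemma Ccoef_zero {θ : ℝ} (hθ : 0 < θ) {M I : ℕ} (hI : 1 ≤ I) (hIM : I ≤ M) :
    Ccoef θ M I 0 = 0 := by
  have h := Lagrange.coeff_eq_sum (injOn_lam_sub hθ hIM) (P := 1)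
    (by rw [Polynomial.degree_one, card_range]; exact_mod_cast Nat.succ_pos I)
  rw [card_range, add_tsub_cancel_right, Polynomial.coeff_one, if_neg (by omega)] at h
  simp only [Polynomial.eval_one, one_div] at h
  simp [Ccoef, ← h]

lemma hasDerivAt_Ccoef (θ : ℝ) (M I : ℕ) (t : ℝ) :
    HasDerivAt (Ccoef θ M I)
      ((-1 : ℝ) ^ I * ∑ k ∈ range (I + 1), -lam θ (M - k) * Real.exp (-lam θ (M - k) * t) /
        ∏ h ∈ (range (I + 1)).erase k, (lam θ (M - k) - lam θ (M - h))) t := by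
  refine HasDerivAt.const_mul _ (HasDerivAt.fun_sum fun k _ => ?_)
  have h := (((hasDerivAt_id t).const_mul (-lam θ (M - k))).exp).div_const
    (∏ h ∈ (range (I + 1)).erase k, (lam θ (M - k) - lam θ (M - h)))
  exact h.congr_deriv (by simp only [id, mul_one]; ring)

-- The top node `k = I + 1` drops out, and every other denominator loses one factor.
lemma Ccoef_eq_sum_sub_mul {θ : ℝ} (hθ : 0 < θ) {M I : ℕ} (hIM : I + 1 ≤ M) (t : ℝ) :
    Ccoef θ M I t = (-1 : ℝ) ^ (I + 1) * ∑ k ∈ range (I + 1 + 1),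
      (lam θ (M - (I + 1)) - lam θ (M - k)) * Real.exp (-lam θ (M - k) * t) /
        ∏ h ∈ (range (I + 1 + 1)).erase k, (lam θ (M - k) - lam θ (M - h)) := by
  rw [sum_range_succ, sub_self, zero_mul, zero_div, add_zero, pow_succ, mul_neg_one, neg_mul,
    ← mul_neg, ← sum_neg_distrib, Ccoef]
  congr 1
  refine sum_congr rfl fun k hk => ?_
  have hk : k < I + 1 := mem_range.mp hk
  have hne : lam θ (M - k) - lam θ (M - (I + 1)) ≠ 0 :=
    sub_ne_zero.mpr ((lam_strictMono hθ).injective.ne (by omega))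
  rw [range_add_one (n := I + 1), erase_insert_of_ne (by omega), prod_insert (by simp)]
  field_simp
  ring

lemma hasDerivAt_Ccoef_succ {θ : ℝ} (hθ : 0 < θ) {M I : ℕ} (hIM : I + 1 ≤ M) (t : ℝ) :
    HasDerivAt (Ccoef θ M (I + 1))
      (Ccoef θ M I t - lam θ (M - (I + 1)) * Ccoef θ M (I + 1) t) t := by
  convert hasDerivAt_Ccoef θ M (I + 1) t using 1
  rw [Ccoef_eq_sum_sub_mul hθ hIM, Ccoef, mul_left_comm, ← mul_sub, mul_sum, ← sum_sub_distrib]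
  congr 1
  refine sum_congr rfl fun k _ => ?_
  ring

lemma sum_tsub_of_le {ι : Type*} [Fintype ι] {m n : ι → ℕ} (h : n ≤ m) :
    ∑ j, (m - n) j = ∑ j, m j - ∑ j, n j :=
  sum_tsub_distrib _ fun j _ => h j

lemma add_single_le_iff {ι : Type*} [DecidableEq ι] {m n : ι → ℕ} (h : n ≤ m) (j : ι) :
    n + Pi.single j 1 ≤ m ↔ n j < m j := by
  refine ⟨fun h' => by simpa using h' j, fun hj l => ?_⟩
  by_cases hl : l = j
  · subst hl
    simpa using hj
  · simpa [hl] using h l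

lemma choose_tsub_succ_mul {a b : ℕ} (hb : b < a) :
    a.choose (a - (b + 1)) * (b + 1) = a.choose (a - b) * (a - b) := by
  rw [Nat.choose_symm hb, Nat.choose_symm hb.le, Nat.choose_succ_right_eq]

lemma succ_mul_prod_choose_tsub_add_single {ι : Type*} [Fintype ι] [DecidableEq ι]
    {m n : ι → ℕ} {j : ι} (hj : n j < m j) :
    ((n j + 1 : ℕ) : ℝ) * ∏ l, ((m l).choose ((m - (n + Pi.single j 1) : ι → ℕ) l) : ℝ) =
      ((m - n) j : ℝ) * ∏ l, ((m l).choose ((m - n) l) : ℝ) := by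
  have hcoord : ∀ l,
      (m l).choose ((m - (n + Pi.single j 1) : ι → ℕ) l) * (if l = j then n j + 1 else 1) =
        (m l).choose ((m - n) l) * (if l = j then (m - n) j else 1) := by
    intro l
    by_cases hl : l = j
    · subst hl
      simpa using choose_tsub_succ_mul hj
    · simp [hl]
  have := congrArg (fun x : ℕ => (x : ℝ)) (Fintype.prod_congr _ _ hcoord)
  simpa only [Nat.cast_prod, Nat.cast_mul, prod_mul_distrib, Fintype.prod_ite_eq', mul_comm,
    Nat.cast_ite, Nat.cast_one] using this

lemma pcoef_eq_Ccoef_mul (θ : ℝ) {K : ℕ} (m i : Fin K → ℕ) (t : ℝ) :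
    pcoef θ m i t = Ccoef θ (∑ j, m j) (∑ j, i j) t *
      (∏ h ∈ range (∑ j, i j), lam θ ((∑ j, m j) - h)) * hyp m i := by
  unfold pcoef
  split_ifs with h
  · simp [h, Ccoef, hyp]
  · rfl

lemma q_of_le (θ : ℝ) {K : ℕ} {m n : Fin K → ℕ} (h : n ≤ m) (t : ℝ) :
    q θ m n t = pcoef θ m (m - n) t :=
  if_pos h

lemma q_of_not_le (θ : ℝ) {K : ℕ} {m n : Fin K → ℕ} (h : ¬n ≤ m) (t : ℝ) : q θ m n t = 0 :=
  if_neg h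

lemma succ_mul_q_add_single (θ : ℝ) {K : ℕ} {m n : Fin K → ℕ} (hn : n ≤ m) {J : ℕ}
    (hJ : ∑ l, (m - n) l = J + 1) (j : Fin K) (t : ℝ) :
    ((n j : ℝ) + 1) * q θ m (n + Pi.single j 1) t =
      Ccoef θ (∑ l, m l) J t * (∏ h ∈ range J, lam θ ((∑ l, m l) - h)) *
        ((∑ l, m l).choose J : ℝ)⁻¹ * (∏ l, ((m l).choose ((m - n) l) : ℝ)) * (m - n) j := by
  by_cases hj : n j < m j
  · have hle := (add_single_le_iff hn j).mpr hj
    have hsum : ∑ l, (m - (n + Pi.single j 1) : Fin K → ℕ) l = J := by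
      rw [sum_tsub_of_le hle]
      simp only [Pi.add_apply, sum_add_distrib, sum_pi_single', mem_univ, if_true]
      rw [sum_tsub_of_le hn] at hJ
      omega
    have hprod := succ_mul_prod_choose_tsub_add_single hj
    push_cast at hprod
    rw [q_of_le θ hle, pcoef_eq_Ccoef_mul, hsum, hyp, hsum]
    linear_combination Ccoef θ (∑ l, m l) J t * (∏ h ∈ range J, lam θ ((∑ l, m l) - h)) *
      ((∑ l, m l).choose J : ℝ)⁻¹ * hprod
  · have hzero : (m - n) j = 0 := by simp only [Pi.sub_apply]; omega
    rw [q_of_not_le θ (mt (add_single_le_iff hn j).mp hj), hzero]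
    simp

lemma hasDerivAt_q_of_ne {θ : ℝ} (hθ : 0 < θ) {K : ℕ} {m n : Fin K → ℕ} (hn : n ≤ m)
    (hne : n ≠ m) (t : ℝ) :
    HasDerivAt (fun u => q θ m n u)
      ((θ + ∑ j, (n j : ℝ)) / 2 * ∑ i, ((n i : ℝ) + 1) * q θ m (n + Pi.single i 1) t
        - lam θ (∑ j, n j) * q θ m n t) t := by
  set M := ∑ l, m l
  set N := ∑ l, n l
  have hNM : N < M := Fintype.sum_strictMono (lt_of_le_of_ne hn hne)
  obtain ⟨J, hJ⟩ : ∃ J, ∑ l, (m - n) l = J + 1 :=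
    Nat.exists_eq_add_one.mpr (by rw [sum_tsub_of_le hn]; omega)
  have hMN : M - N = J + 1 := sum_tsub_of_le hn ▸ hJ
  set Λ := ∏ h ∈ range J, lam θ (M - h)
  set W := ∏ l, ((m l).choose ((m - n) l) : ℝ)
  have hq : ∀ u, q θ m n u =
      Ccoef θ M (J + 1) u * (Λ * lam θ (N + 1)) * (M.choose (J + 1) : ℝ)⁻¹ * W := by
    intro u
    rw [q_of_le θ hn, pcoef_eq_Ccoef_mul, hJ, prod_range_succ, show M - J = N + 1 by omega, hyp,
      hJ]
    ring
  have hsum : ∑ i, ((n i : ℝ) + 1) * q θ m (n + Pi.single i 1) t =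
      Ccoef θ M J t * Λ * (M.choose J : ℝ)⁻¹ * W * (J + 1) := by
    simp_rw [succ_mul_q_add_single θ hn hJ _ t, ← mul_sum]
    rw [← Nat.cast_sum, hJ]
    push_cast
    rfl
  have hchoose : ((J + 1 : ℕ) : ℝ) * M.choose (J + 1) = (N + 1 : ℕ) * M.choose J := by
    norm_cast
    rw [mul_comm, Nat.choose_succ_right_eq, show M - J = N + 1 by omega, mul_comm]
  have hcJ : (M.choose J : ℝ) ≠ 0 := by exact_mod_cast (Nat.choose_pos (by omega)).ne'
  have hcJ1 : (M.choose (J + 1) : ℝ) ≠ 0 := by exact_mod_cast (Nat.choose_pos (by omega)).ne'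
  simp only [hq]
  refine (((hasDerivAt_Ccoef_succ hθ (by omega) t).mul_const _).mul_const _).mul_const _
    |>.congr_deriv ?_
  have hN : ∑ j, (n j : ℝ) = N := (Nat.cast_sum _ _).symm
  rw [hsum, show M - (J + 1) = N by omega, hN, lam_succ]
  push_cast at hchoose
  field_simp
  linear_combination -(Ccoef θ M J t * Λ * W) * hchoose

lemma q_self (θ : ℝ) {K : ℕ} (m : Fin K → ℕ) (t : ℝ) :
    q θ m m t = Real.exp (-lam θ (∑ j, m j) * t) := by
  rw [q_of_le θ le_rfl, tsub_self, pcoef, if_pos rfl]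

lemma q_self_add_single (θ : ℝ) {K : ℕ} (m : Fin K → ℕ) (i : Fin K) (t : ℝ) :
    q θ m (m + Pi.single i 1) t = 0 :=
  q_of_not_le θ (fun h => by simpa using h i) t

lemma hasDerivAt_q_self (θ : ℝ) {K : ℕ} (m : Fin K → ℕ) (t : ℝ) :
    HasDerivAt (fun u => q θ m m u)
      ((θ + ∑ j, (m j : ℝ)) / 2 * ∑ i, ((m i : ℝ) + 1) * q θ m (m + Pi.single i 1) t
        - lam θ (∑ j, m j) * q θ m m t) t := by
  simp only [q_self, q_self_add_single, mul_zero, sum_const_zero, zero_sub]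
  exact ((hasDerivAt_id t).const_mul _).exp.congr_deriv (by simp only [id, mul_one]; ring)

lemma q_zero_of_ne {θ : ℝ} (hθ : 0 < θ) {K : ℕ} {m n : Fin K → ℕ} (hn : n ≤ m) (hne : n ≠ m) :
    q θ m n 0 = 0 := by
  have hNM : ∑ j, n j < ∑ j, m j := Fintype.sum_strictMono (lt_of_le_of_ne hn hne)
  rw [q_of_le θ hn, pcoef_eq_Ccoef_mul, sum_tsub_of_le hn,
    Ccoef_zero hθ (by omega) (by omega), zero_mul, zero_mul]

theorem stmt4 (θ : ℝ) (hθ : 0 < θ) (K : ℕ) (m : Fin K → ℕ) :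
    (q θ m m 0 = 1 ∧ ∀ n : Fin K → ℕ, n ≤ m → n ≠ m → q θ m n 0 = 0) ∧
    ∀ t : ℝ, 0 ≤ t → ∀ n : Fin K → ℕ, n ≤ m →
      HasDerivAt (fun u => q θ m n u)
        ((θ + ∑ j, (n j : ℝ)) / 2 * ∑ i, ((n i : ℝ) + 1) * q θ m (n + Pi.single i 1) t
          - lam θ (∑ j, n j) * q θ m n t) t := by
  refine ⟨⟨by simp [q_self], fun n hn hne => q_zero_of_ne hθ hn hne⟩, fun t _ n hn => ?_⟩
  rcases eq_or_ne n m with rfl | hne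
  · exact hasDerivAt_q_self θ n t
  · exact hasDerivAt_q_of_ne hθ hn hne t
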